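/- Let δ > 0. For every integer p ≥ 1 and every finite collection of points x_1,...,x_n ∈ ℝ^p, there exist points y_1,...,y_n in a real Hilbert space such that ‖y_i − y_j‖² = ln(1 + ‖x_i − x_j‖²/δ) for all i, j. That is, the logarithmic transformation φ(D) = ln(1 + D/δ) is a Schoenberg transformation. -/

import Mathlib

/-!
By Schoenberg's criterion, a symmetric matrix `D` with zero diagonal is a matrix of squared
distances in a Hilbert space as soon as `∑ cᵢ cⱼ Dᵢⱼ ≤ 0` whenever `∑ cᵢ = 0`: the matrix
`(Dᵢₒ + Dₒⱼ - Dᵢⱼ) / 2` is then positive semidefinite, hence a Gram matrix.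

For `Dᵢⱼ = ‖xᵢ - xⱼ‖²` and `∑ cᵢ = 0`, the function `g u = ∑ cᵢ cⱼ log (1 + Dᵢⱼ / u)` has
derivative `∑ cᵢ cⱼ (u + Dᵢⱼ)⁻¹ ≥ 0`, because `(u + Dᵢⱼ)⁻¹ = ∫₀^∞ e^{-ut} e^{-t Dᵢⱼ} dt` and the
Gaussian kernel `e^{-t‖xᵢ - xⱼ‖²}` is positive semidefinite (Schur's product theorem applied to
the exponential series of the Gram matrix). Since `g u → 0` as `u → ∞`, `g δ ≤ 0`.
-/

open Finset Set

/-- `d` is realizable as the matrix of squared distances between `n` points of a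
real Hilbert space. -/
def IsHilbertSqDistMatrix {n : ℕ} (d : Fin n → Fin n → ℝ) : Prop :=
  ∃ (H : Type) (inst : NormedAddCommGroup H),
    letI := inst
    ∃ (_ : InnerProductSpace ℝ H) (_ : CompleteSpace H) (y : Fin n → H),
      ∀ i j, ‖y i - y j‖ ^ 2 = d i j

open Matrix MeasureTheory Filter Topology
open scoped MatrixOrder InnerProductSpace

theorem Real.hasDerivAt_log_one_add_div {a u : ℝ} (hu : 0 < u) (hua : 0 < u + a) :
    HasDerivAt (fun v => Real.log (1 + a / v)) ((u + a)⁻¹ - u⁻¹) u := by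
  have hne : 1 + a * u⁻¹ ≠ 0 := by
    rw [← div_eq_mul_inv, one_add_div hu.ne']
    exact (div_pos hua hu).ne'
  have hquot := (((hasDerivAt_inv hu.ne').const_mul a).const_add 1).log hne
  simp only [← div_eq_mul_inv] at hquot
  convert hquot using 1
  field_simp
  ring

theorem Real.tendsto_log_one_add_div_atTop (a : ℝ) :
    Tendsto (fun v => Real.log (1 + a / v)) atTop (𝓝 0) := by
  have hquot : Tendsto (fun v => 1 + a / v) atTop (𝓝 1) := by
    simpa using ((tendsto_const_nhds (x := a)).div_atTop tendsto_id).const_add 1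
  have hlog := (Real.continuousAt_log one_ne_zero).tendsto.comp hquot
  rwa [Real.log_one] at hlog

namespace Matrix

variable {ι : Type*} [Fintype ι]

theorem posSemidef_iff_sum_mul_mul_nonneg {M : Matrix ι ι ℝ} :
    M.PosSemidef ↔ M.IsSymm ∧ ∀ c : ι → ℝ, 0 ≤ ∑ i, ∑ j, c i * c j * M i j := by
  rw [posSemidef_iff_dotProduct_mulVec, isHermitian_iff_isSymm]
  refine and_congr_right fun _ => forall_congr' fun c => ?_
  have hterm : ∀ i j, c i * (M i j * c j) = c i * c j * M i j := fun _ _ => by ring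
  simp only [star_trivial, dotProduct, mulVec, Finset.mul_sum, hterm]

theorem posSemidef_of_hasSum {F : ℕ → Matrix ι ι ℝ} {M : Matrix ι ι ℝ}
    (hF : ∀ k, (F k).PosSemidef) (hM : ∀ i j, HasSum (fun k => F k i j) (M i j)) :
    M.PosSemidef := by
  have hF' k := posSemidef_iff_sum_mul_mul_nonneg.mp (hF k)
  refine posSemidef_iff_sum_mul_mul_nonneg.mpr ⟨IsSymm.ext fun i j => ?_, fun c => ?_⟩
  · exact (hM j i).unique (by simpa only [(hF' _).1.apply] using hM i j)
  · exact (hasSum_sum fun i _ => hasSum_sum fun j _ => (hM i j).mul_left (c i * c j)).nonneg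
      fun k => (hF' k).2 c

theorem posSemidef_of_integral {α : Type*} [MeasurableSpace α] {μ : Measure α}
    {F : α → Matrix ι ι ℝ} (hF : ∀ᵐ a ∂μ, (F a).PosSemidef)
    (hint : ∀ i j, Integrable (fun a => F a i j) μ) :
    (of fun i j => ∫ a, F a i j ∂μ).PosSemidef := by
  refine posSemidef_iff_sum_mul_mul_nonneg.mpr ⟨IsSymm.ext fun i j => ?_, fun c => ?_⟩
  · refine integral_congr_ae ?_
    filter_upwards [hF] with a ha using (posSemidef_iff_sum_mul_mul_nonneg.mp ha).1.apply i j
  · have hsum : ∑ i, ∑ j, c i * c j * (of fun i j => ∫ a, F a i j ∂μ) i j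
        = ∫ a, ∑ i, ∑ j, c i * c j * F a i j ∂μ := by
      rw [integral_finsetSum _ fun i _ => integrable_finsetSum _ fun j _ =>
        (hint i j).const_mul _]
      refine Finset.sum_congr rfl fun i _ => ?_
      rw [integral_finsetSum _ fun j _ => (hint i j).const_mul _]
      simp only [of_apply, integral_const_mul]
    rw [hsum]
    refine integral_nonneg_of_ae ?_
    filter_upwards [hF] with a ha using (posSemidef_iff_sum_mul_mul_nonneg.mp ha).2 c

theorem PosSemidef.map_pow {A : Matrix ι ι ℝ} (hA : A.PosSemidef) (k : ℕ) :
    (A.map (· ^ k)).PosSemidef := by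
  induction k with
  | zero =>
    convert posSemidef_vecMulVec_self_star (fun _ : ι => (1 : ℝ)) using 1
    ext i j
    simp [vecMulVec]
  | succ k ih =>
    have hpow : A.map (· ^ (k + 1)) = A.map (· ^ k) ⊙ A := by
      ext i j
      simp [pow_succ]
    rw [hpow]
    exact ih.hadamard hA

theorem PosSemidef.map_exp {A : Matrix ι ι ℝ} (hA : A.PosSemidef) :
    (A.map Real.exp).PosSemidef :=
  posSemidef_of_hasSum
    (fun k => (hA.map_pow k).smul (by positivity : (0 : ℝ) ≤ (Nat.factorial k : ℝ)⁻¹))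
    fun i j => by
      simpa [Real.exp_eq_exp_ℝ, div_eq_inv_mul] using
        NormedSpace.expSeries_div_hasSum_exp (A i j)

variable {E : Type*} [NormedAddCommGroup E] [InnerProductSpace ℝ E]

theorem posSemidef_exp_neg_mul_norm_sub_sq (x : ι → E) {t : ℝ} (ht : 0 ≤ t) :
    (of fun i j => Real.exp (-(t * ‖x i - x j‖ ^ 2))).PosSemidef := by
  have hexp := (((posSemidef_gram ℝ x).smul (by positivity : (0 : ℝ) ≤ 2 * t)).map_exp)
  refine posSemidef_iff_sum_mul_mul_nonneg.mpr
    ⟨IsSymm.ext fun i j => by simp only [of_apply, norm_sub_rev], fun c => ?_⟩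
  set w : ι → ℝ := fun i => Real.exp (-(t * ‖x i‖ ^ 2))
  have hterm : ∀ i j, c i * c j * Real.exp (-(t * ‖x i - x j‖ ^ 2))
      = (c i * w i) * (c j * w j) * ((2 * t) • gram ℝ x).map Real.exp i j := by
    intro i j
    have hpolar : -(t * ‖x i - x j‖ ^ 2)
        = -(t * ‖x i‖ ^ 2) + -(t * ‖x j‖ ^ 2) + 2 * t * ⟪x i, x j⟫_ℝ := by
      rw [norm_sub_sq_real]; ring
    simp only [w, map_apply, smul_apply, gram_apply, smul_eq_mul, hpolar, Real.exp_add]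
    ring
  simpa only [of_apply, hterm] using
    (posSemidef_iff_sum_mul_mul_nonneg.mp hexp).2 fun i => c i * w i

theorem posSemidef_inv_add_norm_sub_sq (x : ι → E) {u : ℝ} (hu : 0 < u) :
    (of fun i j => (u + ‖x i - x j‖ ^ 2)⁻¹).PosSemidef := by
  have hpos : ∀ i j, 0 < u + ‖x i - x j‖ ^ 2 := fun i j => by positivity
  have hlaplace : ∀ i j, (u + ‖x i - x j‖ ^ 2)⁻¹
      = ∫ t in Ioi 0, Real.exp (-(u + ‖x i - x j‖ ^ 2) * t) := by
    intro i j
    rw [integral_exp_mul_Ioi (neg_lt_zero.mpr (hpos i j)), mul_zero, Real.exp_zero,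
      neg_div_neg_eq, one_div]
  have hsplit : ∀ i j t, Real.exp (-(u + ‖x i - x j‖ ^ 2) * t)
      = (Real.exp (-(u * t)) • of fun i j => Real.exp (-(t * ‖x i - x j‖ ^ 2))) i j := by
    intro i j t
    rw [smul_apply, of_apply, smul_eq_mul, ← Real.exp_add]
    ring_nf
  simp only [hlaplace, hsplit]
  refine posSemidef_of_integral ?_ fun i j => ?_
  · filter_upwards [ae_restrict_mem measurableSet_Ioi] with t ht
    exact (posSemidef_exp_neg_mul_norm_sub_sq x (le_of_lt ht)).smul (Real.exp_nonneg _)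
  · simp only [← hsplit]
    exact integrableOn_exp_mul_Ioi (neg_lt_zero.mpr (hpos i j)) 0

def IsCondNegSemidef (D : Matrix ι ι ℝ) : Prop :=
  ∀ c : ι → ℝ, ∑ i, c i = 0 → ∑ i, ∑ j, c i * c j * D i j ≤ 0

theorem isCondNegSemidef_log_one_add_div {D : Matrix ι ι ℝ} (hD : ∀ i j, 0 ≤ D i j)
    (hres : ∀ u > 0, (of fun i j => (u + D i j)⁻¹).PosSemidef) {δ : ℝ} (hδ : 0 < δ) :
    (of fun i j => Real.log (1 + D i j / δ)).IsCondNegSemidef := by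
  intro c hc
  set g : ℝ → ℝ := fun u => ∑ i, ∑ j, c i * c j * Real.log (1 + D i j / u)
  have hderiv : ∀ u > 0, HasDerivAt g (∑ i, ∑ j, c i * c j * ((u + D i j)⁻¹ - u⁻¹)) u :=
    fun u hu => HasDerivAt.fun_sum fun i _ => HasDerivAt.fun_sum fun j _ =>
      (Real.hasDerivAt_log_one_add_div hu (by linarith [hD i j])).const_mul _
  -- the `u⁻¹` part of the derivative is `(∑ c)² u⁻¹ = 0`
  have hderiv_nonneg : ∀ u > 0, 0 ≤ ∑ i, ∑ j, c i * c j * ((u + D i j)⁻¹ - u⁻¹) := by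
    intro u hu
    have hsplit : ∀ i j, c i * c j * ((u + D i j)⁻¹ - u⁻¹)
        = c i * c j * (of fun i j => (u + D i j)⁻¹) i j - c i * (c j * u⁻¹) := fun i j => by
      simp only [of_apply]; ring
    simp only [hsplit, Finset.sum_sub_distrib, ← Finset.mul_sum, ← Finset.sum_mul, hc, zero_mul,
      sub_zero]
    exact (posSemidef_iff_sum_mul_mul_nonneg.mp (hres u hu)).2 c
  have hmono : MonotoneOn g (Ioi 0) :=
    monotoneOn_of_hasDerivWithinAt_nonneg (convex_Ioi 0)
      (fun u hu => (hderiv u hu).continuousAt.continuousWithinAt)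
      (fun u hu => (hderiv u (interior_subset hu)).hasDerivWithinAt)
      (fun u hu => hderiv_nonneg u (interior_subset hu))
  have hlim : Tendsto g atTop (𝓝 0) := by
    simpa using tendsto_finsetSum _ fun i _ => tendsto_finsetSum _ fun j _ =>
      (Real.tendsto_log_one_add_div_atTop (D i j)).const_mul (c i * c j)
  exact ge_of_tendsto hlim (eventually_ge_atTop δ |>.mono fun u hu =>
    hmono hδ (hδ.trans_le hu) hu)

theorem sum_mul_mul_sub_single_sum [DecidableEq ι] (D : Matrix ι ι ℝ) (hdiag : ∀ i, D i i = 0)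
    (o : ι) (c : ι → ℝ) :
    ∑ i, ∑ j, (c - Pi.single o (∑ k, c k) : ι → ℝ) i * (c - Pi.single o (∑ k, c k) : ι → ℝ) j
        * D i j
      = ∑ i, ∑ j, c i * c j * (D i j - D i o - D o j) := by
  simp only [Pi.sub_apply, Pi.single_apply, sub_mul, mul_sub, Finset.sum_sub_distrib, ite_mul,
    mul_ite, zero_mul, mul_zero, Finset.sum_ite_eq', Finset.sum_ite_irrel, Finset.sum_const_zero,
    Finset.mem_univ, if_true, hdiag]
  simp only [Finset.sum_mul, Finset.mul_sum]
  rw [Finset.sum_comm (f := fun x i => c i * c x * D o x)]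
  ring

-- For a realization `‖yᵢ - yⱼ‖² = Dᵢⱼ`, this is the Gram matrix of the vectors `yᵢ - yₒ`.
theorem IsCondNegSemidef.posSemidef_of_isSymm {D : Matrix ι ι ℝ} (hneg : D.IsCondNegSemidef)
    (hsymm : D.IsSymm) (hdiag : ∀ i, D i i = 0) (o : ι) :
    (of fun i j => (D i o + D o j - D i j) / 2).PosSemidef := by
  classical
  refine posSemidef_iff_sum_mul_mul_nonneg.mpr ⟨IsSymm.ext fun i j => ?_, fun c => ?_⟩
  · simp only [of_apply, hsymm.apply]
    ring
  · have hcentered := hneg (c - Pi.single o (∑ k, c k)) (by simp)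
    rw [sum_mul_mul_sub_single_sum D hdiag] at hcentered
    have hterm : ∀ i j, c i * c j * (of fun i j => (D i o + D o j - D i j) / 2) i j
        = -(c i * c j * (D i j - D i o - D o j)) / 2 := fun i j => by simp only [of_apply]; ring
    simp only [hterm, ← Finset.sum_div, Finset.sum_neg_distrib]
    linarith

theorem exists_gram_eq_of_posSemidef {G : Matrix ι ι ℝ} (hG : G.PosSemidef) :
    ∃ y : ι → EuclideanSpace ℝ ι, gram ℝ y = G := by
  classical
  obtain ⟨B, rfl⟩ := CStarAlgebra.nonneg_iff_eq_star_mul_self.mp hG.nonneg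
  refine ⟨fun i => WithLp.toLp 2 fun k => B k i, ?_⟩
  ext i j
  simp [PiLp.inner_apply, mul_apply, mul_comm]

theorem IsCondNegSemidef.exists_norm_sub_sq_eq {D : Matrix ι ι ℝ} (hneg : D.IsCondNegSemidef)
    (hsymm : D.IsSymm) (hdiag : ∀ i, D i i = 0) :
    ∃ y : ι → EuclideanSpace ℝ ι, ∀ i j, ‖y i - y j‖ ^ 2 = D i j := by
  cases isEmpty_or_nonempty ι with
  | inl _ => exact ⟨0, fun i => isEmptyElim i⟩
  | inr hι =>
    obtain ⟨o⟩ := hι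
    obtain ⟨y, hy⟩ := exists_gram_eq_of_posSemidef (hneg.posSemidef_of_isSymm hsymm hdiag o)
    refine ⟨y, fun i j => ?_⟩
    have hinner i j : ⟪y i, y j⟫_ℝ = (D i o + D o j - D i j) / 2 := by
      rw [← gram_apply (𝕜 := ℝ), hy, of_apply]
    rw [norm_sub_sq_real, ← real_inner_self_eq_norm_sq, ← real_inner_self_eq_norm_sq, hinner,
      hinner, hinner, hdiag, hdiag, hsymm.apply o j, hsymm.apply i o]
    ring

end Matrix

theorem logarithmic_is_schoenberg_general (δ : ℝ) (hδ : 0 < δ)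
    (p n : ℕ) (x : Fin n → EuclideanSpace ℝ (Fin p)) :
    IsHilbertSqDistMatrix (fun i j => Real.log (1 + ‖x i - x j‖ ^ 2 / δ)) := by
  have hneg : (of fun i j => Real.log (1 + ‖x i - x j‖ ^ 2 / δ)).IsCondNegSemidef :=
    isCondNegSemidef_log_one_add_div (D := fun i j => ‖x i - x j‖ ^ 2)
      (fun i j => sq_nonneg _) (fun u hu => posSemidef_inv_add_norm_sub_sq x hu) hδ
  obtain ⟨y, hy⟩ := hneg.exists_norm_sub_sq_eq
    (IsSymm.ext fun i j => by simp only [of_apply, norm_sub_rev]) (fun i => by simp)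
  exact ⟨EuclideanSpace ℝ (Fin n), inferInstance, inferInstance, inferInstance, y, hy⟩

/-- The logarithmic transformation `φ(D) = ln (1 + D/δ)`, `δ > 0`, is a Schoenberg
transformation: for every configuration of points in `ℝ^p` there are points of a real
Hilbert space with `‖y i - y j‖² = ln (1 + ‖x i - x j‖²/δ)`. -/
theorem logarithmic_is_schoenberg (δ : ℝ) (hδ : 0 < δ)
    (p n : ℕ) (hp : 1 ≤ p) (x : Fin n → EuclideanSpace ℝ (Fin p)) :
    IsHilbertSqDistMatrix (fun i j => Real.log (1 + ‖x i - x j‖ ^ 2 / δ)) :=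
  logarithmic_is_schoenberg_general δ hδ p n x
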